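/- Assume E_X[X⁴] < +∞. Then for arbitrary ε₁, ε₂ > 0, as n, m_n → +∞, P_w( P_{X|w}( |S²_{m_n,n} − S_n²| > ε₁ ) > ε₂ ) = O(n/m_n²); that is, there exist a constant K > 0 and an index N such that for all n ≥ N, P_w( P_{X|w}( |S²_{m_n,n} − S_n²| > ε₁ ) > ε₂ ) ≤ K · n/m_n². -/

import Mathlib

/-!
Fix a realization `k` of the weights and center at `μ = E X`. Then `S²_{m,n} - S²_n` equals
`∑ (kᵢ/m - 1/n)((Xᵢ - μ)² - σ²) - (∑ (kᵢ/m)(Xᵢ - μ))² + (∑ (Xᵢ - μ)/n)²`, and Chebyshev's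
inequality for these three weighted i.i.d. sums bounds `P_X(|S²_{m,n} - S_n²| > ε₁)` by
`a·A(k) + b/n`, where `A(k) = ∑ (kᵢ/m - 1/n)²` and `a, b` depend only on `ε₁`, `Var X` and
`Var (X - μ)²` (this is where `E X⁴ < ∞` enters). So for large `n` the event `P_{X|w}(…) > ε₂`
forces `A(w) > t` for a fixed `t > 0`, and Markov's inequality for `A(w)²` concludes: by
Cauchy–Schwarz and the fourth central moment of the binomial marginals,
`E_w[A(w)²] ≤ n ∑ⱼ E_w[(wⱼ/m - 1/n)⁴] ≤ 4n/m²`.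
-/

open MeasureTheory ProbabilityTheory Filter

/-- The standard normal distribution function Φ. -/
noncomputable def Phi (t : ℝ) : ℝ := ((gaussianReal 0 1) (Set.Iic t)).toReal

/-- `(w 1, …, w n)` has the multinomial distribution of size `m` with equal
probabilities `1/n` under `Pw`. -/
def IsUnifMultinomial {Ωw : Type} [MeasurableSpace Ωw] (Pw : Measure Ωw)
    (n m : ℕ) (w : Fin n → Ωw → ℕ) : Prop :=
  (∀ i, Measurable (w i)) ∧
  ∀ k : Fin n → ℕ,
    (Pw {ω | ∀ i, w i ω = k i}).toReal =
      if ∑ i, k i = m then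
        (Nat.factorial m : ℝ) / (∏ i, (Nat.factorial (k i) : ℝ)) * (1 / n) ^ m
      else 0

/-- Sample mean X̄_n. -/
noncomputable def sampleMean {Ωx : Type} (X : ℕ → Ωx → ℝ) (n : ℕ) (ωx : Ωx) : ℝ :=
  (∑ i : Fin n, X i ωx) / n

/-- Sample variance S_n². -/
noncomputable def sampleVar {Ωx : Type} (X : ℕ → Ωx → ℝ) (n : ℕ) (ωx : Ωx) : ℝ :=
  (∑ i : Fin n, (X i ωx - sampleMean X n ωx) ^ 2) / n

/-- Randomized sample mean X̄_{m,n}, for a realization `k` of the multinomial weights. -/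
noncomputable def randMean {Ωx : Type} (X : ℕ → Ωx → ℝ) (n m : ℕ)
    (k : Fin n → ℕ) (ωx : Ωx) : ℝ :=
  (∑ i : Fin n, (k i : ℝ) * X i ωx) / m

/-- Randomized sample variance S²_{m,n}. -/
noncomputable def randVar {Ωx : Type} (X : ℕ → Ωx → ℝ) (n m : ℕ)
    (k : Fin n → ℕ) (ωx : Ωx) : ℝ :=
  (∑ i : Fin n, (k i : ℝ) * (X i ωx - randMean X n m k ωx) ^ 2) / m

/-- √(Σ_j (k_j/m − 1/n)²). -/
noncomputable def weightNorm (n m : ℕ) (k : Fin n → ℕ) : ℝ :=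
  Real.sqrt (∑ j : Fin n, ((k j : ℝ) / m - 1 / n) ^ 2)

/-- The randomized pivot G^{(1)}_{m,n} (given the weight realization `k`). -/
noncomputable def G1 {Ωx : Type} (X : ℕ → Ωx → ℝ) (μ : ℝ) (n m : ℕ)
    (k : Fin n → ℕ) (ωx : Ωx) : ℝ :=
  (∑ i : Fin n, |(k i : ℝ) / m - 1 / n| * (X i ωx - μ)) /
    (Real.sqrt (sampleVar X n ωx) * weightNorm n m k)

/-- The randomized pivot T^{(1)}_{m,n}. -/
noncomputable def T1 {Ωx : Type} (X : ℕ → Ωx → ℝ) (n m : ℕ)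
    (k : Fin n → ℕ) (ωx : Ωx) : ℝ :=
  (∑ i : Fin n, ((k i : ℝ) / m - 1 / n) * X i ωx) /
    (Real.sqrt (sampleVar X n ωx) * weightNorm n m k)

/-- The randomized pivot G^{(2)}_{m,n}. -/
noncomputable def G2 {Ωx : Type} (X : ℕ → Ωx → ℝ) (μ : ℝ) (n m : ℕ)
    (k : Fin n → ℕ) (ωx : Ωx) : ℝ :=
  (∑ i : Fin n, |(k i : ℝ) / m - 1 / n| * (X i ωx - μ)) /
    (Real.sqrt (randVar X n m k ωx) * weightNorm n m k)

/-- The randomized pivot T^{(2)}_{m,n}. -/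
noncomputable def T2 {Ωx : Type} (X : ℕ → Ωx → ℝ) (n m : ℕ)
    (k : Fin n → ℕ) (ωx : Ωx) : ℝ :=
  (∑ i : Fin n, ((k i : ℝ) / m - 1 / n) * X i ωx) /
    (Real.sqrt (randVar X n m k ωx) * weightNorm n m k)

open Finset

lemma Nat.factorial_mul_add_descFactorial (k r : ℕ) :
    k.factorial * (k + r).descFactorial r = (k + r).factorial := by
  rw [Nat.add_descFactorial_eq_ascFactorial, Nat.factorial_mul_ascFactorial]

lemma Nat.multinomial_add_mul_prod_descFactorial {ι : Type*} (s : Finset ι) (k r : ι → ℕ) :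
    Nat.multinomial s (k + r) * ∏ i ∈ s, (k i + r i).descFactorial (r i)
      = (∑ i ∈ s, (k i + r i)).descFactorial (∑ i ∈ s, r i) * Nat.multinomial s k := by
  refine Nat.eq_of_mul_eq_mul_right (prod_pos (s := s) fun i _ => (k i).factorial_pos) ?_
  calc Nat.multinomial s (k + r) * (∏ i ∈ s, (k i + r i).descFactorial (r i))
        * ∏ i ∈ s, (k i).factorial
      = (∏ i ∈ s, (k i + r i).factorial) * Nat.multinomial s (k + r) := by
        simp only [← Nat.factorial_mul_add_descFactorial, prod_mul_distrib]
        ring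
    _ = (∑ i ∈ s, k i + ∑ i ∈ s, r i).factorial := by
        rw [← sum_add_distrib]
        exact Nat.multinomial_spec s (k + r)
    _ = (∑ i ∈ s, (k i + r i)).descFactorial (∑ i ∈ s, r i) * Nat.multinomial s k
        * ∏ i ∈ s, (k i).factorial := by
        rw [← Nat.factorial_mul_add_descFactorial, ← Nat.multinomial_spec, sum_add_distrib]
        ring

lemma Finset.sum_piAntidiag_eq_sum_piAntidiag_add {ι M : Type*} [Fintype ι] [DecidableEq ι]
    [AddCommMonoid M] {f : (ι → ℕ) → M} {m : ℕ} {r : ι → ℕ} (hr : ∑ i, r i ≤ m)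
    (hf : ∀ k, f k ≠ 0 → r ≤ k) :
    ∑ k ∈ piAntidiag univ m, f k = ∑ l ∈ piAntidiag univ (m - ∑ i, r i), f (l + r) := by
  refine (sum_bij_ne_zero (fun l _ _ => l + r) (fun l hl _ => ?_)
    (fun _ _ _ _ _ _ h => add_right_cancel h) (fun k hk hne => ?_) fun _ _ _ => rfl).symm
  · refine mem_piAntidiag.2 ⟨?_, fun i _ => mem_univ i⟩
    rw [Pi.add_def, sum_add_distrib, (mem_piAntidiag.1 hl).1, Nat.sub_add_cancel hr]
  · have hkr : k - r + r = k := tsub_add_cancel_of_le (hf k hne)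
    refine ⟨k - r, mem_piAntidiag.2 ⟨?_, fun i _ => mem_univ i⟩, by rwa [hkr], hkr⟩
    rw [eq_tsub_iff_add_eq_of_le hr, ← (mem_piAntidiag.1 hk).1, ← sum_add_distrib]
    exact congrArg (∑ i, · i) hkr

section Multinomial

variable {ι : Type*} [Fintype ι] {p : ι → ℝ}

noncomputable def multinomialWeight (p : ι → ℝ) (k : ι → ℕ) : ℝ :=
  Nat.multinomial univ k * ∏ i, p i ^ k i

lemma multinomialWeight_nonneg (hp : ∀ i, 0 ≤ p i) (k : ι → ℕ) : 0 ≤ multinomialWeight p k :=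
  mul_nonneg (Nat.cast_nonneg _) (prod_nonneg fun i _ => pow_nonneg (hp i) _)

lemma multinomialWeight_add_mul_prod_descFactorial (l r : ι → ℕ) :
    multinomialWeight p (l + r) * ∏ i, ((l i + r i).descFactorial (r i) : ℝ)
      = (∑ i, (l i + r i)).descFactorial (∑ i, r i) * (∏ i, p i ^ r i)
        * multinomialWeight p l := by
  have h := congrArg (Nat.cast (R := ℝ)) (Nat.multinomial_add_mul_prod_descFactorial univ l r)
  push_cast at h
  simp only [multinomialWeight, Pi.add_apply, pow_add, prod_mul_distrib]
  linear_combination (∏ i, p i ^ l i) * (∏ i, p i ^ r i) * h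

variable [DecidableEq ι]

lemma sum_multinomialWeight (hp : ∑ i, p i = 1) (m : ℕ) :
    ∑ k ∈ piAntidiag univ m, multinomialWeight p k = 1 := by
  simp [multinomialWeight, ← sum_pow_eq_sum_piAntidiag, hp]

theorem sum_multinomialWeight_mul_prod_descFactorial (hp : ∑ i, p i = 1) (m : ℕ) (r : ι → ℕ) :
    ∑ k ∈ piAntidiag univ m, multinomialWeight p k * ∏ i, ((k i).descFactorial (r i) : ℝ)
      = m.descFactorial (∑ i, r i) * ∏ i, p i ^ r i := by
  have hvanish : ∀ k : ι → ℕ, ∀ i, k i < r i →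
      multinomialWeight p k * ∏ i, ((k i).descFactorial (r i) : ℝ) = 0 := fun k i hi =>
    mul_eq_zero_of_right _ (prod_eq_zero (mem_univ i) (by
      simp [Nat.descFactorial_eq_zero_iff_lt.2 hi]))
  rcases le_or_gt (∑ i, r i) m with hr | hr
  · rw [sum_piAntidiag_eq_sum_piAntidiag_add hr fun k hk i =>
      not_lt.1 fun hi => hk (hvanish k i hi)]
    calc _ = ∑ l ∈ piAntidiag univ (m - ∑ i, r i),
            m.descFactorial (∑ i, r i) * (∏ i, p i ^ r i) * multinomialWeight p l :=
          sum_congr rfl fun l hl => (multinomialWeight_add_mul_prod_descFactorial l r).trans (by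
            rw [sum_add_distrib, (mem_piAntidiag.1 hl).1, Nat.sub_add_cancel hr])
      _ = m.descFactorial (∑ i, r i) * ∏ i, p i ^ r i := by
          rw [← mul_sum, sum_multinomialWeight hp, mul_one]
  · rw [Nat.descFactorial_eq_zero_iff_lt.2 hr, Nat.cast_zero, zero_mul]
    refine sum_eq_zero fun k hk => ?_
    obtain ⟨i, -, hi⟩ := exists_lt_of_sum_lt ((mem_piAntidiag.1 hk).1.trans_lt hr)
    exact hvanish k i hi

lemma sum_multinomialWeight_mul_descFactorial (hp : ∑ i, p i = 1) (m : ℕ) (j : ι) (a : ℕ) :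
    ∑ k ∈ piAntidiag univ m, multinomialWeight p k * ((k j).descFactorial a : ℝ)
      = m.descFactorial a * p j ^ a := by
  simpa [Pi.single_apply, apply_ite] using
    sum_multinomialWeight_mul_prod_descFactorial hp m (Pi.single j a)

lemma sub_pow_four_eq_descFactorial (x : ℕ) (c : ℝ) :
    ((x : ℝ) - c) ^ 4 = (x.descFactorial 4 : ℝ) + (6 - 4 * c) * (x.descFactorial 3 : ℝ)
      + (7 - 12 * c + 6 * c ^ 2) * (x.descFactorial 2 : ℝ)
      + (1 - 4 * c + 6 * c ^ 2 - 4 * c ^ 3) * (x.descFactorial 1 : ℝ) + c ^ 4 := by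
  simp only [← descPochhammer_eval_eq_descFactorial ℝ]
  simp [descPochhammer_succ_right]
  ring

theorem sum_multinomialWeight_mul_sub_pow_four (hp : ∑ i, p i = 1) (m : ℕ) (j : ι) :
    ∑ k ∈ piAntidiag univ m, multinomialWeight p k * ((k j : ℝ) - m * p j) ^ 4
      = m * p j * (1 - p j) * (1 + 3 * (m - 2) * p j * (1 - p j)) := by
  set c : ℝ := m * p j
  let M : ℕ → ℝ := fun a =>
    ∑ k ∈ piAntidiag univ m, multinomialWeight p k * ((k j).descFactorial a : ℝ)
  have hM : ∀ a, M a = m.descFactorial a * p j ^ a :=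
    sum_multinomialWeight_mul_descFactorial hp m j
  calc ∑ k ∈ piAntidiag univ m, multinomialWeight p k * ((k j : ℝ) - c) ^ 4
      = ∑ k ∈ piAntidiag univ m, (multinomialWeight p k * ((k j).descFactorial 4 : ℝ)
          + (6 - 4 * c) * (multinomialWeight p k * ((k j).descFactorial 3 : ℝ))
          + (7 - 12 * c + 6 * c ^ 2) * (multinomialWeight p k * ((k j).descFactorial 2 : ℝ))
          + (1 - 4 * c + 6 * c ^ 2 - 4 * c ^ 3)
            * (multinomialWeight p k * ((k j).descFactorial 1 : ℝ))
          + c ^ 4 * multinomialWeight p k) :=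
        sum_congr rfl fun k _ => by rw [sub_pow_four_eq_descFactorial]; ring
    _ = M 4 + (6 - 4 * c) * M 3 + (7 - 12 * c + 6 * c ^ 2) * M 2
          + (1 - 4 * c + 6 * c ^ 2 - 4 * c ^ 3) * M 1
          + c ^ 4 * ∑ k ∈ piAntidiag univ m, multinomialWeight p k := by
        simp only [M, sum_add_distrib, ← mul_sum]
    _ = _ := by
        rw [hM, hM, hM, hM, sum_multinomialWeight hp]
        simp only [← descPochhammer_eval_eq_descFactorial ℝ]
        simp [c, descPochhammer_succ_right]
        ring

end Multinomial

lemma Finset.sum_filter_lt_le_sum_mul_sq_div {α : Type*} (s : Finset α) {p f : α → ℝ}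
    (hp : ∀ a ∈ s, 0 ≤ p a) {t : ℝ} (ht : 0 < t) :
    ∑ a ∈ s with t < f a, p a ≤ (∑ a ∈ s, p a * f a ^ 2) / t ^ 2 := by
  rw [le_div_iff₀ (by positivity), sum_mul]
  calc ∑ a ∈ s with t < f a, p a * t ^ 2
      ≤ ∑ a ∈ s with t < f a, p a * f a ^ 2 :=
        sum_le_sum fun a ha => mul_le_mul_of_nonneg_left
          (pow_le_pow_left₀ ht.le (mem_filter.1 ha).2.le 2) (hp a (mem_filter.1 ha).1)
    _ ≤ ∑ a ∈ s, p a * f a ^ 2 :=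
        sum_le_sum_of_subset_of_nonneg (filter_subset _ _) fun a ha _ =>
          mul_nonneg (hp a ha) (sq_nonneg _)

lemma sum_mul_sub_sum_mul_sq {ι : Type*} (s : Finset ι) {c : ι → ℝ} (hc : ∑ i ∈ s, c i = 1)
    (x : ι → ℝ) (a : ℝ) :
    ∑ i ∈ s, c i * (x i - ∑ j ∈ s, c j * x j) ^ 2
      = ∑ i ∈ s, c i * (x i - a) ^ 2 - (∑ i ∈ s, c i * (x i - a)) ^ 2 := by
  set r := ∑ j ∈ s, c j * (x j - a)
  have hmean : ∑ j ∈ s, c j * x j = a + r := by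
    simp only [r, mul_sub, sum_sub_distrib, ← sum_mul, hc]
    ring
  have hexpand : ∀ i, c i * (x i - (a + r)) ^ 2
      = c i * (x i - a) ^ 2 - 2 * r * (c i * (x i - a)) + r ^ 2 * c i := fun i => by ring
  simp only [hmean, hexpand, sum_add_distrib, sum_sub_distrib, ← mul_sum, hc]
  ring

section Weights

variable {n m : ℕ} {k : Fin n → ℕ}

noncomputable def weightSqDist (n m : ℕ) (k : Fin n → ℕ) : ℝ :=
  ∑ j, ((k j : ℝ) / m - 1 / n) ^ 2

lemma weightSqDist_nonneg : 0 ≤ weightSqDist n m k := sum_nonneg fun _ _ => sq_nonneg _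

lemma sum_div_eq_one (hk : ∑ i, k i = m) (hm : m ≠ 0) : ∑ i, (k i : ℝ) / m = 1 := by
  rw [← sum_div, div_eq_one_iff_eq (by exact_mod_cast hm)]
  exact_mod_cast hk

lemma sum_div_sub_inv_eq_zero (hk : ∑ i, k i = m) (hm : m ≠ 0) (hn : n ≠ 0) :
    ∑ i, ((k i : ℝ) / m - 1 / n) = 0 := by
  simp [sum_sub_distrib, sum_div_eq_one hk hm, hn]

lemma sum_sq_div_eq_weightSqDist_add (hk : ∑ i, k i = m) (hm : m ≠ 0) (hn : n ≠ 0) :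
    ∑ i, ((k i : ℝ) / m) ^ 2 = weightSqDist n m k + 1 / n := by
  have hexpand : ∀ i, ((k i : ℝ) / m) ^ 2
      = ((k i : ℝ) / m - 1 / n) ^ 2 + 2 / n * ((k i : ℝ) / m - 1 / n) + 1 / n ^ 2 :=
    fun i => by ring
  simp only [hexpand, sum_add_distrib, ← mul_sum, sum_div_sub_inv_eq_zero hk hm hn,
    sum_const, card_univ, Fintype.card_fin, nsmul_eq_mul, weightSqDist]
  rw [mul_zero, add_zero]
  congr 1
  field_simp

lemma sum_multinomialWeight_mul_weightSqDist_sq_le (hn : n ≠ 0) (hm : m ≠ 0) :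
    ∑ k ∈ piAntidiag univ m, multinomialWeight (fun _ : Fin n => 1 / (n : ℝ)) k
        * weightSqDist n m k ^ 2 ≤ 4 * n / m ^ 2 := by
  set p : Fin n → ℝ := fun _ => 1 / (n : ℝ)
  have hp : ∑ i, p i = 1 := by simp [p, hn]
  have hn1 : (1 : ℝ) ≤ n := by exact_mod_cast Nat.one_le_iff_ne_zero.2 hn
  have hm1 : (1 : ℝ) ≤ m := by exact_mod_cast Nat.one_le_iff_ne_zero.2 hm
  have hdev : ∀ (k : Fin n → ℕ) j,
      ((k j : ℝ) / m - 1 / n) ^ 4 = ((k j : ℝ) - m * p j) ^ 4 / m ^ 4 :=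
    fun k j => by simp only [p]; field_simp
  calc ∑ k ∈ piAntidiag univ m, multinomialWeight p k * weightSqDist n m k ^ 2
      ≤ ∑ k ∈ piAntidiag univ m,
          multinomialWeight p k * (n * ∑ j, ((k j : ℝ) / m - 1 / n) ^ 4) := by
        refine sum_le_sum fun k _ => mul_le_mul_of_nonneg_left ?_
          (multinomialWeight_nonneg (fun _ => by positivity) k)
        have h := sq_sum_le_card_mul_sum_sq (s := univ)
          (f := fun j => ((k j : ℝ) / m - 1 / n) ^ 2)
        rw [card_univ, Fintype.card_fin] at h
        exact h.trans_eq (congrArg _ (sum_congr rfl fun j _ => by ring))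
    _ = n / m ^ 4 * ∑ j, ∑ k ∈ piAntidiag univ m,
          multinomialWeight p k * ((k j : ℝ) - m * p j) ^ 4 := by
        simp only [hdev, mul_sum]
        rw [sum_comm]
        exact sum_congr rfl fun j _ => sum_congr rfl fun k _ => by ring
    _ = n / m ^ 4
          * (n * (m * (1 / n) * (1 - 1 / n) * (1 + 3 * (m - 2) * (1 / n) * (1 - 1 / n)))) := by
        simp only [sum_multinomialWeight_mul_sub_pow_four hp, sum_const, card_univ,
          Fintype.card_fin, nsmul_eq_mul, p]
    _ ≤ 4 * n / m ^ 2 := by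
        rw [div_mul_eq_mul_div, div_le_div_iff₀ (by positivity) (by positivity)]
        field_simp
        have h : ((n : ℝ) - 1) * (n ^ 2 + (n - 1) * 3 * (m - 2)) ≤ n * (n ^ 2 + 3 * n * m) := by
          nlinarith [mul_nonneg (sub_nonneg.2 hn1) (sub_nonneg.2 hm1)]
        nlinarith [mul_le_mul_of_nonneg_left hm1 (by positivity : (0 : ℝ) ≤ n ^ 3),
          mul_le_mul_of_nonneg_left hn1 (by positivity : (0 : ℝ) ≤ n ^ 2 * m)]

end Weights

namespace IsUnifMultinomial

variable {Ω : Type} [MeasurableSpace Ω] {P : Measure Ω} {n m : ℕ} {w : Fin n → Ω → ℕ}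

lemma measurableSet_fiber (hw : IsUnifMultinomial P n m w) (k : Fin n → ℕ) :
    MeasurableSet {ω | ∀ i, w i ω = k i} := by
  simp only [Set.ofPred_forall]
  exact MeasurableSet.iInter fun i => hw.1 i (measurableSet_singleton (k i))

lemma measureReal_fiber (hw : IsUnifMultinomial P n m w) {k : Fin n → ℕ}
    (hk : k ∈ piAntidiag univ m) :
    P.real {ω | ∀ i, w i ω = k i} = multinomialWeight (fun _ => 1 / (n : ℝ)) k := by
  have hsum := (mem_piAntidiag.1 hk).1
  have hspec := congrArg (Nat.cast (R := ℝ)) (Nat.multinomial_spec univ k)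
  push_cast at hspec
  rw [hsum] at hspec
  rw [measureReal_def, hw.2 k, if_pos hsum, multinomialWeight, prod_pow_eq_pow_sum, hsum,
    ← hspec, mul_div_cancel_left₀ _
      (prod_ne_zero_iff.2 fun i _ => Nat.cast_ne_zero.2 (k i).factorial_ne_zero)]

variable [IsProbabilityMeasure P]

lemma ae_sum_eq (hw : IsUnifMultinomial P n m w) (hn : n ≠ 0) : ∀ᵐ ω ∂P, ∑ i, w i ω = m := by
  set C : (Fin n → ℕ) → Set Ω := fun k => {ω | ∀ i, w i ω = k i}
  have hdisj : Set.PairwiseDisjoint (piAntidiag (univ : Finset (Fin n)) m : Set (Fin n → ℕ)) C :=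
    fun k₁ _ k₂ _ hne =>
      Set.disjoint_left.2 fun ω h₁ h₂ => hne (funext fun i => (h₁ i).symm.trans (h₂ i))
  have hU : P.real (⋃ k ∈ piAntidiag univ m, C k) = 1 := by
    rw [measureReal_biUnion_finset hdisj fun k _ => hw.measurableSet_fiber k,
      sum_congr rfl fun k hk => hw.measureReal_fiber hk, sum_multinomialWeight (by simp [hn])]
  have hU' : P (⋃ k ∈ piAntidiag univ m, C k) = 1 := by
    rw [← ofReal_measureReal (measure_ne_top _ _), hU, ENNReal.ofReal_one]
  filter_upwards [(mem_ae_iff_prob_eq_one (Finset.measurableSet_biUnion _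
    fun k _ => hw.measurableSet_fiber k)).2 hU'] with ω hω
  obtain ⟨k, hk, hωk⟩ := Set.mem_iUnion₂.1 hω
  rw [← (mem_piAntidiag.1 hk).1]
  exact sum_congr rfl fun i _ => hωk i

lemma measureReal_mem_le_sum (hw : IsUnifMultinomial P n m w) (hn : n ≠ 0)
    (s : Set (Fin n → ℕ)) [DecidablePred (· ∈ s)] :
    P.real {ω | (fun i => w i ω) ∈ s}
      ≤ ∑ k ∈ piAntidiag univ m with k ∈ s, multinomialWeight (fun _ => 1 / (n : ℝ)) k := by
  calc P.real {ω | (fun i => w i ω) ∈ s}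
      ≤ P.real (⋃ k ∈ (piAntidiag univ m).filter (· ∈ s), {ω | ∀ i, w i ω = k i}) := by
        refine ENNReal.toReal_mono (measure_ne_top _ _) (measure_mono_ae ?_)
        filter_upwards [hw.ae_sum_eq hn] with ω hsum hs
        exact Set.mem_iUnion₂.2 ⟨fun i => w i ω, mem_filter.2 ⟨mem_piAntidiag.2
          ⟨hsum, fun i _ => mem_univ i⟩, hs⟩, fun i => rfl⟩
    _ ≤ ∑ k ∈ piAntidiag univ m with k ∈ s, P.real {ω | ∀ i, w i ω = k i} :=
        measureReal_biUnion_finset_le _ _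
    _ = _ := sum_congr rfl fun k hk => hw.measureReal_fiber (mem_filter.1 hk).1

lemma measureReal_lt_weightSqDist_le (hw : IsUnifMultinomial P n m w) (hn : n ≠ 0)
    (hm : m ≠ 0) {t : ℝ} (ht : 0 < t) :
    P.real {ω | t < weightSqDist n m fun i => w i ω} ≤ 4 * n / m ^ 2 / t ^ 2 := by
  classical
  exact (hw.measureReal_mem_le_sum hn {k | t < weightSqDist n m k}).trans <|
    (sum_filter_lt_le_sum_mul_sq_div _ (fun k _ => multinomialWeight_nonneg
      (fun _ => by positivity) k) ht).trans <|
    div_le_div_of_nonneg_right (sum_multinomialWeight_mul_weightSqDist_sq_le hn hm) (sq_nonneg _)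

end IsUnifMultinomial

section Variance

variable {Ω : Type} (X : ℕ → Ω → ℝ) {n m : ℕ} {k : Fin n → ℕ}

lemma randVar_eq (hk : ∑ i, k i = m) (hm : m ≠ 0) (ω : Ω) (a : ℝ) :
    randVar X n m k ω = ∑ i, (k i : ℝ) / m * (X i ω - a) ^ 2
      - (∑ i, (k i : ℝ) / m * (X i ω - a)) ^ 2 := by
  have hmean : randMean X n m k ω = ∑ j, (k j : ℝ) / m * X j ω := by
    simp only [randMean, sum_div, mul_div_right_comm]
  rw [← sum_mul_sub_sum_mul_sq _ (sum_div_eq_one hk hm), ← hmean]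
  simp only [randVar, sum_div, mul_div_right_comm]

lemma sampleVar_eq_randVar : sampleVar X n = randVar X n n 1 := by
  ext ω
  simp [sampleVar, sampleMean, randVar, randMean]

lemma randVar_sub_sampleVar_eq (hk : ∑ i, k i = m) (hm : m ≠ 0) (hn : n ≠ 0) (ω : Ω)
    (a b : ℝ) :
    randVar X n m k ω - sampleVar X n ω
      = ∑ i, ((k i : ℝ) / m - 1 / n) * ((X i ω - a) ^ 2 - b)
        - (∑ i, (k i : ℝ) / m * (X i ω - a)) ^ 2
        + (∑ i : Fin n, 1 / (n : ℝ) * (X i ω - a)) ^ 2 := by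
  have hb : ∑ i, ((k i : ℝ) / m - 1 / n) * ((X i ω - a) ^ 2 - b)
      = ∑ i, ((k i : ℝ) / m - 1 / n) * (X i ω - a) ^ 2 := by
    simp only [mul_sub, sum_sub_distrib, ← sum_mul, sum_div_sub_inv_eq_zero hk hm hn, zero_mul,
      sub_zero]
  rw [hb, sampleVar_eq_randVar, randVar_eq X hk hm ω a, randVar_eq X (by simp) hn ω a]
  simp only [Pi.one_apply, Nat.cast_one, sub_mul, sum_sub_distrib]
  ring

end Variance

lemma ProbabilityTheory.iIndepFun.measureReal_abs_sum_mul_ge_le {Ω : Type*} [MeasurableSpace Ω]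
    {P : Measure Ω} [IsProbabilityMeasure P] {Y : ℕ → Ω → ℝ} (hindep : iIndepFun Y P)
    (hid : ∀ i, IdentDistrib (Y i) (Y 0) P P) (hY : MemLp (Y 0) 2 P) {n : ℕ} (e : Fin n → ℝ)
    {c : ℝ} (hc : 0 < c) :
    P.real {ω | c ≤ |∑ i, e i * (Y i ω - P[Y 0])|} ≤ (∑ i, e i ^ 2) * Var[Y 0; P] / c ^ 2 := by
  set V : Fin n → Ω → ℝ := fun i ω => e i * (Y i ω - P[Y 0])
  have hVmem : ∀ i, MemLp (V i) 2 P := fun i =>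
    (((hid i).memLp_iff.2 hY).sub (memLp_const _)).const_mul (e i)
  have hVar : ∀ i, Var[V i; P] = e i ^ 2 * Var[Y 0; P] := fun i => by
    rw [variance_const_mul, variance_sub_const ((hid i).memLp_iff.2 hY).1, (hid i).variance_eq]
  have hmean : ∀ i, P[V i] = 0 := fun i => by
    simp only [V, integral_const_mul, integral_sub ((hid i).integrable_iff.2
      (hY.integrable one_le_two)) (integrable_const _), (hid i).integral_eq, integral_const,
      probReal_univ, smul_eq_mul, one_mul, sub_self, mul_zero]
  have hindepV : Set.Pairwise ↑(univ : Finset (Fin n)) fun i j => V i ⟂ᵢ[P] V j :=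
    fun i _ j _ hij => (hindep.indepFun (Fin.val_injective.ne hij)).comp
      (measurable_const.mul (measurable_id.sub_const _))
      (measurable_const.mul (measurable_id.sub_const _))
  have hcheb := meas_ge_le_variance_div_sq (memLp_finsetSum' univ fun i _ => hVmem i) hc
  rw [IndepFun.variance_sum (fun i _ => hVmem i) hindepV] at hcheb
  simp only [Finset.sum_apply] at hcheb
  rw [integral_finsetSum _ fun i _ => (hVmem i).integrable one_le_two] at hcheb
  refine ENNReal.toReal_le_of_le_ofReal (div_nonneg (mul_nonneg (sum_nonneg fun i _ =>
    sq_nonneg _) (variance_nonneg _ _)) (sq_nonneg _)) ?_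
  simpa [hVar, hmean, sum_mul, V] using hcheb

lemma abs_sub_sq_add_sq_lt {w u v ε : ℝ} (hw : |w| < ε / 3) (hu : |u| < √(ε / 3))
    (hv : |v| < √(ε / 3)) : |w - u ^ 2 + v ^ 2| < ε := by
  have hsq : ∀ x : ℝ, |x| < √(ε / 3) → x ^ 2 < ε / 3 := fun x hx => by
    simpa only [sq_abs] using (Real.lt_sqrt (abs_nonneg x)).1 hx
  have := hsq u hu
  have := hsq v hv
  rw [abs_lt] at hw ⊢
  constructor <;> nlinarith [sq_nonneg u, sq_nonneg v]

lemma measureReal_lt_abs_sub_sq_add_sq_le {Ω : Type*} [MeasurableSpace Ω] (P : Measure Ω)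
    [IsFiniteMeasure P] (W U V : Ω → ℝ) (ε : ℝ) :
    P.real {ω | ε < |W ω - U ω ^ 2 + V ω ^ 2|}
      ≤ P.real {ω | ε / 3 ≤ |W ω|} + P.real {ω | √(ε / 3) ≤ |U ω|}
        + P.real {ω | √(ε / 3) ≤ |V ω|} := by
  have hsub : {ω | ε < |W ω - U ω ^ 2 + V ω ^ 2|} ⊆ {ω | ε / 3 ≤ |W ω|}
      ∪ {ω | √(ε / 3) ≤ |U ω|} ∪ {ω | √(ε / 3) ≤ |V ω|} := fun ω hω => by
    by_contra h
    simp only [Set.mem_union, Set.mem_ofPred_eq, not_or, not_le] at h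
    exact (abs_sub_sq_add_sq_lt h.1.1 h.1.2 h.2).not_gt hω
  exact (measureReal_mono hsub).trans <| (measureReal_union_le _ _).trans <|
    add_le_add_left (measureReal_union_le _ _) _

lemma memLp_four_of_integrable_pow_four {Ω : Type*} [MeasurableSpace Ω] {P : Measure Ω}
    {f : Ω → ℝ} (hf : AEStronglyMeasurable f P) (h : Integrable (fun ω => f ω ^ 4) P) :
    MemLp f 4 P := by
  refine (integrable_norm_rpow_iff hf (by norm_num) (by norm_num)).1 ?_
  convert h using 2 with ω
  simpa [Real.norm_eq_abs] using Even.pow_abs (by decide) (f ω)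

lemma MeasureTheory.MemLp.sq_of_four {Ω : Type*} [MeasurableSpace Ω] {P : Measure Ω}
    {f : Ω → ℝ} (hf : MemLp f 4 P) : MemLp (fun ω => f ω ^ 2) 2 P := by
  convert hf.norm_rpow_div 2 using 1
  · ext ω
    simp [Real.norm_eq_abs]
  · rw [ENNReal.eq_div_iff (by norm_num) (by norm_num)]
    norm_num

section RandVarDeviation

variable {Ω : Type} [MeasurableSpace Ω] {P : Measure Ω} [IsProbabilityMeasure P]
  {X : ℕ → Ω → ℝ}

lemma measureReal_lt_abs_randVar_sub_sampleVar_le (hindep : iIndepFun X P)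
    (hid : ∀ i, IdentDistrib (X i) (X 0) P P) (hX : MemLp (X 0) 4 P) {n m : ℕ}
    {k : Fin n → ℕ} (hk : ∑ i, k i = m) (hm : m ≠ 0) (hn : n ≠ 0) {ε : ℝ} (hε : 0 < ε) :
    P.real {ω | ε < |randVar X n m k ω - sampleVar X n ω|}
      ≤ 9 * Var[fun ω => (X 0 ω - P[X 0]) ^ 2; P] * weightSqDist n m k / ε ^ 2
        + 3 * Var[X 0; P] * (weightSqDist n m k + 2 / n) / ε := by
  set a := P[X 0]
  set Z : ℕ → Ω → ℝ := fun i ω => (X i ω - a) ^ 2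
  have hsq : Measurable fun x : ℝ => (x - a) ^ 2 := by fun_prop
  have hZindep : iIndepFun Z P := hindep.comp (fun _ => _) fun _ => hsq
  have hX2 : MemLp (X 0) 2 P := hX.mono_exponent (by norm_num)
  have hsum_inv : ∑ _i : Fin n, (1 / (n : ℝ)) ^ 2 = 1 / (n : ℝ) := by
    simp only [sum_const, card_univ, Fintype.card_fin, nsmul_eq_mul]
    field_simp
  simp_rw [randVar_sub_sampleVar_eq X hk hm hn _ a P[Z 0]]
  calc _ ≤ _ := measureReal_lt_abs_sub_sq_add_sq_le P _ _ _ ε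
    _ ≤ (∑ i, ((k i : ℝ) / m - 1 / n) ^ 2) * Var[Z 0; P] / (ε / 3) ^ 2
          + (∑ i, ((k i : ℝ) / m) ^ 2) * Var[X 0; P] / √(ε / 3) ^ 2
          + (∑ _i : Fin n, (1 / (n : ℝ)) ^ 2) * Var[X 0; P] / √(ε / 3) ^ 2 :=
        add_le_add (add_le_add
          (hZindep.measureReal_abs_sum_mul_ge_le (fun i => (hid i).comp hsq)
            (hX.sub (memLp_const a)).sq_of_four _ (by positivity))
          (hindep.measureReal_abs_sum_mul_ge_le hid hX2 _ (by positivity)))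
          (hindep.measureReal_abs_sum_mul_ge_le hid hX2 _ (by positivity))
    _ = _ := by
        rw [sum_sq_div_eq_weightSqDist_add hk hm hn, hsum_inv, Real.sq_sqrt (by positivity)]
        change weightSqDist n m k * Var[fun ω => (X 0 ω - P[X 0]) ^ 2; P] / _ + _ + _ = _
        generalize Var[fun ω => (X 0 ω - P[X 0]) ^ 2; P] = VZ
        field_simp
        ring

lemma exists_measureReal_lt_abs_randVar_sub_sampleVar_le (hindep : iIndepFun X P)
    (hid : ∀ i, IdentDistrib (X i) (X 0) P P) (hX : MemLp (X 0) 4 P) {ε : ℝ} (hε : 0 < ε) :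
    ∃ a b : ℝ, 0 ≤ a ∧ ∀ {n m : ℕ} {k : Fin n → ℕ}, ∑ i, k i = m → m ≠ 0 → n ≠ 0 →
      P.real {ω | ε < |randVar X n m k ω - sampleVar X n ω|}
        ≤ a * weightSqDist n m k + b / n := by
  refine ⟨9 * Var[fun ω => (X 0 ω - P[X 0]) ^ 2; P] / ε ^ 2 + 3 * Var[X 0; P] / ε,
    6 * Var[X 0; P] / ε, ?_, fun hk hm hn => ?_⟩
  · have := variance_nonneg (fun ω => (X 0 ω - P[X 0]) ^ 2) P
    have := variance_nonneg (X 0) P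
    positivity
  · exact (measureReal_lt_abs_randVar_sub_sampleVar_le hindep hid hX hk hm hn hε).trans_eq
      (by ring)

end RandVarDeviation

theorem randVar_rate_general
    {Ωx Ωw : Type} [MeasurableSpace Ωx] [MeasurableSpace Ωw]
    (Px : Measure Ωx) (Pw : Measure Ωw)
    [IsProbabilityMeasure Px] [IsProbabilityMeasure Pw]
    (X : ℕ → Ωx → ℝ)
    (hXmeas : ∀ i, Measurable (X i))
    (hXindep : iIndepFun X Px)
    (hXid : ∀ i, IdentDistrib (X i) (X 0) Px Px)
    (hM4 : Integrable (fun ω => (X 0 ω) ^ 4) Px)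
    (m : ℕ → ℕ) (w : (n : ℕ) → Fin n → Ωw → ℕ)
    (hw : ∀ n, IsUnifMultinomial Pw n (m n) (w n))
    (hm : Tendsto m atTop atTop)
    :
    ∀ ε1 ε2 : ℝ, 0 < ε1 → 0 < ε2 →
      ∃ K : ℝ, 0 < K ∧ ∃ N : ℕ, ∀ n ≥ N,
        (Pw {ωw | (Px {ωx |
            |randVar X n (m n) (fun i => w n i ωw) ωx - sampleVar X n ωx| > ε1}).toReal
              > ε2}).toReal
          ≤ K * (n : ℝ) / (m n : ℝ) ^ 2 := by
  intro ε1 ε2 hε1 hε2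
  obtain ⟨a, b, ha, hx⟩ := exists_measureReal_lt_abs_randVar_sub_sampleVar_le hXindep hXid
    (memLp_four_of_integrable_pow_four (hXmeas 0).aestronglyMeasurable hM4) hε1
  set t := ε2 / (2 * a + 1)
  have hat : a * t ≤ ε2 / 2 := by
    rw [mul_div_assoc', div_le_div_iff₀ (by positivity) two_pos]
    nlinarith
  refine ⟨4 / t ^ 2, by positivity, ?_⟩
  obtain ⟨N, hN⟩ := eventually_atTop.1 <| (eventually_gt_atTop 0).and <|
    (hm.eventually_gt_atTop 0).and <|
    (tendsto_const_div_atTop_nhds_zero_nat b).eventually (gt_mem_nhds (half_pos hε2))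
  refine ⟨N, fun n hnN => ?_⟩
  obtain ⟨hn, hmn, hb⟩ := hN n hnN
  have hsub : {ωw | (Px {ωx |
      |randVar X n (m n) (fun i => w n i ωw) ωx - sampleVar X n ωx| > ε1}).toReal > ε2}
        ≤ᵐ[Pw] {ωw | t < weightSqDist n (m n) fun i => w n i ωw} := by
    filter_upwards [(hw n).ae_sum_eq hn.ne'] with ωw hsum hlarge
    exact not_le.1 fun hA => hlarge.not_ge <| (hx hsum hmn.ne' hn.ne').trans (by nlinarith)
  calc _ ≤ Pw.real {ωw | t < weightSqDist n (m n) fun i => w n i ωw} :=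
        ENNReal.toReal_mono (measure_ne_top _ _) (measure_mono_ae hsub)
    _ ≤ 4 * n / (m n) ^ 2 / t ^ 2 :=
        (hw n).measureReal_lt_weightSqDist_le hn.ne' hmn.ne' (by positivity)
    _ = 4 / t ^ 2 * n / (m n) ^ 2 := by ring

theorem randVar_rate
    {Ωx Ωw : Type} [MeasurableSpace Ωx] [MeasurableSpace Ωw]
    (Px : Measure Ωx) (Pw : Measure Ωw)
    [IsProbabilityMeasure Px] [IsProbabilityMeasure Pw]
    (X : ℕ → Ωx → ℝ)
    (hXmeas : ∀ i, Measurable (X i))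
    (hXindep : iIndepFun X Px)
    (hXid : ∀ i, IdentDistrib (X i) (X 0) Px Px)
    (μ σ2 : ℝ)
    (hXint : Integrable (X 0) Px)
    (hμ : μ = ∫ ω, X 0 ω ∂Px)
    (hVarInt : Integrable (fun ω => (X 0 ω - μ) ^ 2) Px)
    (hσ2 : σ2 = ∫ ω, (X 0 ω - μ) ^ 2 ∂Px)
    (hσ2pos : 0 < σ2)
    (hM4 : Integrable (fun ω => (X 0 ω) ^ 4) Px)
    (m : ℕ → ℕ) (w : (n : ℕ) → Fin n → Ωw → ℕ)
    (hw : ∀ n, IsUnifMultinomial Pw n (m n) (w n))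
    (hm : Tendsto m atTop atTop)
    :
    ∀ ε1 ε2 : ℝ, 0 < ε1 → 0 < ε2 →
      ∃ K : ℝ, 0 < K ∧ ∃ N : ℕ, ∀ n ≥ N,
        (Pw {ωw | (Px {ωx |
            |randVar X n (m n) (fun i => w n i ωw) ωx - sampleVar X n ωx| > ε1}).toReal
              > ε2}).toReal
          ≤ K * (n : ℝ) / (m n : ℝ) ^ 2 :=
  randVar_rate_general Px Pw X hXmeas hXindep hXid hM4 m w hw hm
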